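/- arXiv:2109.10634 — 2 statements merged into one kernel-verified Lean document; each statement's English description precedes it below -/
import Mathlib

section
/- Let w be a Jacobi weight with orthonormal polynomials p_j(w), Gauss nodes x_1,…,x_n (zeros of p_n(w)) and Christoffel numbers λ_k = (∑_{j=0}^{n−1} p_j(w,x_k)²)^{−1}. Define the fundamental VP polynomials Φ_{n,k}^m(x) = λ_k ∑_{j=0}^{n+m−1} μ_{n,j}^m p_j(w,x_k) p_j(w,x) and the VP operator V_n^m(w,f,x) = ∑_{k=1}^n f(x_k) Φ_{n,k}^m(x). Then V_n^m(w, P) = P for every polynomial P of degree at most n−m. -/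
open MeasureTheory Polynomial

/-! For the functional `I Q = ∫ Q w`, every polynomial of degree `< N` equals its Fourier sum
`∑_{j<N} I (Q p_j) p_j`. Dividing by `p_n` shows that interpolatory quadrature at the zeros of
`p_n` is exact up to degree `2n - 1`, and testing it on `ℓ_k · ∑_{j<n} p_j(x_k) p_j` (Lagrange
basis times reproducing kernel) identifies its weights with the Christoffel numbers. Hence
`V_n^m P (t) = ∑_{j<n+m} μ_j I (P p_j) p_j(t)`; when `deg P ≤ n - m` the coefficients with
`μ_j ≠ 1` vanish, leaving the Fourier sum of `P`. -/

namespace Polynomial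

variable {K : Type*} [Field K]

structure IsOrthonormalSequence (I : K[X] →ₗ[K] K) (p : ℕ → K[X]) : Prop where
  natDegree_eq : ∀ j, (p j).natDegree = j
  orthonormal : ∀ i j, I (p i * p j) = if i = j then 1 else 0

theorem map_eq_sum_eval_mul_lagrangeBasis_of_degree_lt {ι : Type*} [DecidableEq ι]
    (I : K[X] →ₗ[K] K) {s : Finset ι} {v : ι → K} (hvs : Set.InjOn v s) {Q : K[X]}
    (hQ : Q.degree < s.card) :
    I Q = ∑ i ∈ s, Q.eval (v i) * I (Lagrange.basis s v i) := by
  conv_lhs => rw [Lagrange.eq_interpolate hvs hQ]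
  simp [Lagrange.interpolate_apply, C_mul']

namespace IsOrthonormalSequence

open Finset

variable {I : K[X] →ₗ[K] K} {p : ℕ → K[X]} (hp : IsOrthonormalSequence I p)
include hp

theorem ne_zero (j : ℕ) : p j ≠ 0 := fun h => by
  simpa [h] using hp.orthonormal j j

def toSequence : Sequence K :=
  ⟨p, fun j => by rw [degree_eq_natDegree (hp.ne_zero j), hp.natDegree_eq]⟩

theorem eq_sum_smul {N : ℕ} {Q : K[X]} (hQ : Q.natDegree < N) :
    Q = ∑ j ∈ range N, I (Q * p j) • p j := by
  have hspan : Submodule.span K (p '' Set.Iio N) = degreeLT K N :=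
    hp.toSequence.span_degreeLT fun i _ => (leadingCoeff_ne_zero.mpr (hp.ne_zero i)).isUnit
  have hmem : Q ∈ Submodule.span K (p '' Set.Iio N) := by
    rw [hspan, mem_degreeLT]
    exact degree_le_natDegree.trans_lt (by exact_mod_cast hQ)
  clear hQ
  induction hmem using Submodule.span_induction with
  | mem q hq =>
    obtain ⟨i, hi, rfl⟩ := hq
    simp [hp.orthonormal, ite_smul, Set.mem_Iio.mp hi]
  | zero => simp
  | add q r _ _ hq hr =>
    conv_lhs => rw [hq, hr]
    simp only [add_mul, map_add, add_smul, sum_add_distrib]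
  | smul a q _ hq =>
    conv_lhs => rw [hq]
    simp only [smul_mul_assoc, map_smul, smul_sum, smul_assoc]

theorem map_mul_eq_zero_of_natDegree_lt {j : ℕ} {Q : K[X]} (hQ : Q.natDegree < j) : I (Q * p j) = 0 := by
  rw [hp.eq_sum_smul hQ, sum_mul, map_sum]
  refine sum_eq_zero fun i hi => ?_
  rw [smul_mul_assoc, map_smul, hp.orthonormal, if_neg (mem_range.mp hi).ne, smul_zero]

theorem map_mul_sum_eval_smul {N : ℕ} {Q : K[X]} (hQ : Q.natDegree < N) (a : K) :
    I (Q * ∑ j ∈ range N, (p j).eval a • p j) = Q.eval a := by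
  conv_rhs => rw [hp.eq_sum_smul hQ]
  simp [mul_sum, map_sum, eval_finsetSum, mul_comm]

section Gauss

variable {n : ℕ} {x : Fin n → K} (hx : Function.Injective x)
  (hzero : ∀ k, (p n).eval (x k) = 0)
include hx hzero

theorem map_eq_sum_eval_mul_lagrangeBasis {Q : K[X]} (hQ : Q.natDegree < 2 * n) :
    I Q = ∑ k, Q.eval (x k) * I (Lagrange.basis univ x k) := by
  set M := p n * C (p n).leadingCoeff⁻¹
  have hM : M.Monic := monic_mul_leadingCoeff_inv (hp.ne_zero n)
  have hMdeg : M.natDegree = n := by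
    rw [natDegree_mul_C (inv_ne_zero (leadingCoeff_ne_zero.mpr (hp.ne_zero n))),
      hp.natDegree_eq]
  have hMq : I (M * (Q /ₘ M)) = 0 := by
    rw [show M * (Q /ₘ M) = (C (p n).leadingCoeff⁻¹ * (Q /ₘ M)) * p n by ring]
    refine hp.map_mul_eq_zero_of_natDegree_lt ((natDegree_C_mul_le _ _).trans_lt ?_)
    rw [natDegree_divByMonic Q hM, hMdeg]
    omega
  have hr : (Q %ₘ M).degree < (univ : Finset (Fin n)).card := by
    rw [card_univ, Fintype.card_fin, ← hMdeg, ← degree_eq_natDegree hM.ne_zero]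
    exact degree_modByMonic_lt Q hM
  -- `Q = Q %ₘ M + M * (Q /ₘ M)`: the second summand vanishes at the nodes and, having a
  -- cofactor of degree `< n`, is orthogonal to `p n`.
  rw [← modByMonic_add_div Q M, map_add, hMq, add_zero,
    map_eq_sum_eval_mul_lagrangeBasis_of_degree_lt I hx.injOn hr]
  simp [M, hzero]

theorem map_lagrangeBasis_eq_inv_sum_sq (k : Fin n) :
    I (Lagrange.basis univ x k) = (∑ j ∈ range n, (p j).eval (x k) ^ 2)⁻¹ := by
  set L := Lagrange.basis univ x k
  set Ker := ∑ j ∈ range n, (p j).eval (x k) • p j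
  have hn : 0 < n := k.pos
  have hL : L.natDegree = n - 1 := by
    rw [Lagrange.natDegree_basis hx.injOn (mem_univ k), card_univ, Fintype.card_fin]
  have hKer : Ker.natDegree ≤ n - 1 := natDegree_sum_le_of_forall_le _ _ fun j hj =>
    (natDegree_smul_le _ _).trans (by rw [hp.natDegree_eq]; have := mem_range.mp hj; omega)
  have hLself : L.eval (x k) = 1 := Lagrange.eval_basis_self hx.injOn (mem_univ k)
  have hreproduce : I (L * Ker) = 1 := by
    rw [hp.map_mul_sum_eval_smul (by omega), hLself]
  have hquadrature : I (L * Ker) = Ker.eval (x k) * I L := by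
    rw [hp.map_eq_sum_eval_mul_lagrangeBasis hx hzero
      (natDegree_mul_le.trans_lt (by omega)), sum_eq_single k]
    · rw [eval_mul, hLself, one_mul]
    · intro i _ hik
      rw [eval_mul, Lagrange.eval_basis_of_ne hik.symm (mem_univ i), zero_mul, zero_mul]
    · simp
  have hKer_eval : Ker.eval (x k) = ∑ j ∈ range n, (p j).eval (x k) ^ 2 := by
    simp [Ker, eval_finsetSum, sq]
  rw [← hKer_eval]
  exact eq_inv_of_mul_eq_one_right (hquadrature ▸ hreproduce)

theorem sum_eval_mul_vallePoussin {m : ℕ} (hm : 0 < m) (hmn : m ≤ n) {μ : ℕ → K}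
    (hμ : ∀ j ≤ n - m, μ j = 1) {P : K[X]} (hP : P.natDegree ≤ n - m) (t : K) :
    ∑ k, P.eval (x k) * ((∑ j ∈ range n, (p j).eval (x k) ^ 2)⁻¹ *
      ∑ j ∈ range (n + m), μ j * (p j).eval (x k) * (p j).eval t) = P.eval t := by
  have hfilter : ∀ j, μ j * I (P * p j) = I (P * p j) := by
    intro j
    rcases le_or_gt j (n - m) with hj | hj
    · rw [hμ j hj, one_mul]
    · rw [hp.map_mul_eq_zero_of_natDegree_lt (hP.trans_lt hj), mul_zero]
  have hquadrature : ∀ j ∈ range (n + m),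
      ∑ k, P.eval (x k) * (p j).eval (x k) * I (Lagrange.basis univ x k) = I (P * p j) := by
    intro j hj
    have hdeg : (P * p j).natDegree < 2 * n :=
      natDegree_mul_le.trans_lt (by rw [hp.natDegree_eq]; have := mem_range.mp hj; omega)
    simp [hp.map_eq_sum_eval_mul_lagrangeBasis hx hzero hdeg]
  calc _ = ∑ j ∈ range (n + m), μ j * (p j).eval t *
          ∑ k, P.eval (x k) * (p j).eval (x k) * I (Lagrange.basis univ x k) := by
        simp_rw [hp.map_lagrangeBasis_eq_inv_sum_sq hx hzero, mul_sum]
        rw [sum_comm]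
        refine sum_congr rfl fun j _ => sum_congr rfl fun k _ => by ring
    _ = (∑ j ∈ range (n + m), I (P * p j) • p j).eval t := by
        rw [eval_finsetSum]
        refine sum_congr rfl fun j hj => ?_
        rw [hquadrature j hj, eval_smul, smul_eq_mul, mul_right_comm, hfilter]
    _ = P.eval t := by rw [← hp.eq_sum_smul (by omega)]

end Gauss

end IsOrthonormalSequence

end Polynomial

section WeightedIntegral

variable {s : Set ℝ} {μ : Measure ℝ} {w : ℝ → ℝ}

noncomputable def integralAgainstWeight (s : Set ℝ) (μ : Measure ℝ) (w : ℝ → ℝ)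
    (hw : ∀ Q : ℝ[X], IntegrableOn (fun y => Q.eval y * w y) s μ) : ℝ[X] →ₗ[ℝ] ℝ where
  toFun Q := ∫ y in s, Q.eval y * w y ∂μ
  map_add' P Q := by
    simp only [eval_add, add_mul]
    exact integral_add (hw P) (hw Q)
  map_smul' a Q := by
    simp only [eval_smul, smul_eq_mul, mul_assoc, RingHom.id_apply]
    exact integral_const_mul a _

theorem integrableOn_of_integral_eval_mul_self_mul_eq_one {Q : ℝ[X]} (hQ : Q.natDegree = 0)
    (h : ∫ y in s, Q.eval y * Q.eval y * w y ∂μ = 1) : IntegrableOn w s μ := by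
  obtain ⟨c, rfl⟩ : ∃ c, Q = C c := ⟨_, eq_C_of_natDegree_eq_zero hQ⟩
  have hc : c ≠ 0 := by
    rintro rfl
    simp at h
  simp only [eval_C] at h
  have hint : IntegrableOn (fun y => c * c * w y) s μ :=
    Integrable.of_integral_ne_zero (h ▸ one_ne_zero)
  exact (integrable_const_mul_iff (IsUnit.mk0 _ (mul_ne_zero hc hc)) w).mp hint

theorem integrableOn_eval_mul (hs : Bornology.IsBounded s) (hsm : MeasurableSet s)
    (hw : IntegrableOn w s μ) (Q : ℝ[X]) : IntegrableOn (fun y => Q.eval y * w y) s μ :=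
  hw.continuousOn_mul_of_subset Q.continuous.continuousOn hs.isCompact_closure hsm subset_closure

end WeightedIntegral

theorem stmt7_general
    (w : ℝ → ℝ)
    (p : ℕ → Polynomial ℝ)
    (hdeg : ∀ j, (p j).natDegree = j)
    (horth : ∀ i j : ℕ,
      (∫ x in Set.Ioo (-1 : ℝ) 1, (p i).eval x * (p j).eval x * w x) =
        if i = j then 1 else 0)
    (n m : ℕ) (hm : 0 < m) (hmn : m < n)
    (x : Fin n → ℝ) (hxinj : Function.Injective x)
    (hzero : ∀ k, (p n).eval (x k) = 0)
    (μ : ℕ → ℝ)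
    (hμ : ∀ j : ℕ, μ j = if j ≤ n - m then 1 else ((n : ℝ) + (m : ℝ) - (j : ℝ)) / (2 * m))
    (lam : Fin n → ℝ)
    (hlam : ∀ k, lam k = (∑ j ∈ Finset.range n, ((p j).eval (x k)) ^ 2)⁻¹)
    (Φ : Fin n → ℝ → ℝ)
    (hΦ : ∀ k t, Φ k t =
      lam k * ∑ j ∈ Finset.range (n + m), μ j * (p j).eval (x k) * (p j).eval t)
    (V : (ℝ → ℝ) → ℝ → ℝ)
    (hV : ∀ f t, V f t = ∑ k : Fin n, f (x k) * Φ k t) :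
    ∀ P : Polynomial ℝ, P.natDegree ≤ n - m →
      ∀ t : ℝ, V (fun y => P.eval y) t = P.eval t := by
  intro P hP t
  have hw : IntegrableOn w (Set.Ioo (-1) 1) :=
    integrableOn_of_integral_eval_mul_self_mul_eq_one (hdeg 0) ((horth 0 0).trans (if_pos rfl))
  set I := integralAgainstWeight (Set.Ioo (-1) 1) volume w
    (integrableOn_eval_mul (Metric.isBounded_Ioo _ _) measurableSet_Ioo hw)
  have hp : IsOrthonormalSequence I p :=
    ⟨hdeg, fun i j => by simpa [I, integralAgainstWeight] using horth i j⟩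
  simp only [hV, hΦ, hlam]
  exact hp.sum_eval_mul_vallePoussin hxinj hzero hm hmn.le (fun j hj => by rw [hμ, if_pos hj]) hP t

/-- Invariance property of the filtered de la Vallée Poussin operator: with `w` a
Jacobi weight, `p j` its orthonormal polynomials, Gauss nodes the zeros of `p n`,
Christoffel numbers `λ_k`, VP filter coefficients `μ_{n,j}^m` and fundamental VP
polynomials `Φ_{n,k}^m`, the operator `V_n^m(w,·)` reproduces every polynomial of
degree at most `n - m`. -/
theorem stmt7 (α β : ℝ) (hα : -1 < α) (hβ : -1 < β)
    (w : ℝ → ℝ)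
    (hw : ∀ x ∈ Set.Ioo (-1 : ℝ) 1, w x = (1 - x) ^ α * (1 + x) ^ β)
    (p : ℕ → Polynomial ℝ)
    (hdeg : ∀ j, (p j).natDegree = j)
    (hlead : ∀ j, 0 < (p j).leadingCoeff)
    (horth : ∀ i j : ℕ,
      (∫ x in Set.Ioo (-1 : ℝ) 1, (p i).eval x * (p j).eval x * w x) =
        if i = j then 1 else 0)
    (n m : ℕ) (hm : 0 < m) (hmn : m < n)
    (x : Fin n → ℝ) (hxinj : Function.Injective x)
    (hxmem : ∀ k, x k ∈ Set.Ioo (-1 : ℝ) 1)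
    (hzero : ∀ k, (p n).eval (x k) = 0)
    (μ : ℕ → ℝ)
    (hμ : ∀ j : ℕ, μ j = if j ≤ n - m then 1 else ((n : ℝ) + (m : ℝ) - (j : ℝ)) / (2 * m))
    (lam : Fin n → ℝ)
    (hlam : ∀ k, lam k = (∑ j ∈ Finset.range n, ((p j).eval (x k)) ^ 2)⁻¹)
    (Φ : Fin n → ℝ → ℝ)
    (hΦ : ∀ k t, Φ k t =
      lam k * ∑ j ∈ Finset.range (n + m), μ j * (p j).eval (x k) * (p j).eval t)
    (V : (ℝ → ℝ) → ℝ → ℝ)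
    (hV : ∀ f t, V f t = ∑ k : Fin n, f (x k) * Φ k t) :
    ∀ P : Polynomial ℝ, P.natDegree ≤ n - m →
      ∀ t : ℝ, V (fun y => P.eval y) t = P.eval t :=
  stmt7_general w p hdeg horth n m hm hmn x hxinj hzero μ hμ lam hlam Φ hΦ V hV
end

section
/- Let v = v^{γ,δ} with γ, δ ≥ 0 and suppose the linear operators V_n : C^0_v → C^0_v satisfy ‖V_n f‖_{C^0_v} ≤ C‖f‖_{C^0_v} uniformly in n, map into polynomials of degree ≤ n+m−1, and reproduce polynomials of degree ≤ n−m, where c₁m ≤ n ≤ c₂m with c₂ ≥ c₁ > 1. Then for every r ≥ 0 the operators V_n are uniformly bounded from the Besov space B_r(v) to itself: ‖V_n f‖_{B_r(v)} ≤ C'‖f‖_{B_r(v)} with C' independent of n and f. -/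
open MeasureTheory Polynomial

/-- Weighted sup norm `‖f v‖_∞` over `(-1,1)`. -/
noncomputable def wnorm (v f : ℝ → ℝ) : ℝ :=
  ⨆ x : Set.Ioo (-1 : ℝ) 1, |f x * v x|

/-- Weighted error of best polynomial approximation
`E_n(f)_v = inf_{deg P ≤ n} ‖(f - P) v‖_∞`. -/
noncomputable def Err (v f : ℝ → ℝ) (n : ℕ) : ℝ :=
  ⨅ P : {P : Polynomial ℝ // P.natDegree ≤ n},
    wnorm v (fun x => f x - (P : Polynomial ℝ).eval x)

/-- Besov type norm `‖f‖_{B_r(v)} = ‖f v‖_∞ + ∑_{n≥1} (n+1)^{r-1} E_n(f)_v`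
(for `r = 0` the weight is `1/(n+1)`). -/
noncomputable def BesovNorm (v f : ℝ → ℝ) (r : ℝ) : ℝ :=
  wnorm v f + ∑' k : ℕ, ((k : ℝ) + 2) ^ (r - 1) * Err v f (k + 1)

/-- Membership in the Besov type space `B_r(v)`: summability of the weighted
best approximation errors. -/
def MemB (v f : ℝ → ℝ) (r : ℝ) : Prop :=
  Summable fun k : ℕ => ((k : ℝ) + 2) ^ (r - 1) * Err v f (k + 1)

/-- Membership in `C^0_v` for the Jacobi weight `v = v^{γ,δ}`: `f v` extends
continuously to `[-1,1]` and vanishes at the endpoints where the weight does. -/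
def MemC0 (γ δ : ℝ) (f : ℝ → ℝ) : Prop :=
  ∃ g : ℝ → ℝ, ContinuousOn g (Set.Icc (-1 : ℝ) 1) ∧
    (∀ x ∈ Set.Ioo (-1 : ℝ) 1, g x = f x * ((1 - x) ^ γ * (1 + x) ^ δ)) ∧
    (0 < γ → g 1 = 0) ∧ (0 < δ → g (-1) = 0)

section helpers

instance ioo_ne : Nonempty (Set.Ioo (-1 : ℝ) 1) := ⟨⟨0, by norm_num⟩⟩
instance poly_ne (n : ℕ) : Nonempty {P : Polynomial ℝ // P.natDegree ≤ n} :=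
  ⟨⟨0, by simp⟩⟩

lemma wnorm_nonneg (v f : ℝ → ℝ) : 0 ≤ wnorm v f :=
  Real.iSup_nonneg fun x => abs_nonneg _

lemma errBdd (v f : ℝ → ℝ) (n : ℕ) :
    BddBelow (Set.range fun P : {P : Polynomial ℝ // P.natDegree ≤ n} =>
      wnorm v (fun x => f x - (P : Polynomial ℝ).eval x)) :=
  ⟨0, by rintro y ⟨P, rfl⟩; exact wnorm_nonneg _ _⟩

lemma Err_nonneg (v f : ℝ → ℝ) (n : ℕ) : 0 ≤ Err v f n :=
  le_ciInf fun _ => wnorm_nonneg _ _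

lemma Err_le (v f : ℝ → ℝ) (n : ℕ) (P : Polynomial ℝ) (hP : P.natDegree ≤ n) :
    Err v f n ≤ wnorm v (fun x => f x - P.eval x) :=
  ciInf_le (errBdd v f n) ⟨P, hP⟩

lemma Err_anti (v f : ℝ → ℝ) {i j : ℕ} (h : i ≤ j) : Err v f j ≤ Err v f i :=
  le_ciInf fun P => ciInf_le (errBdd v f j) ⟨P.1, P.2.trans h⟩

lemma wnorm_congr (v f g : ℝ → ℝ) (h : ∀ x ∈ Set.Ioo (-1:ℝ) 1, f x = g x) :
    wnorm v f = wnorm v g := by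
  unfold wnorm
  congr 1; funext x; rw [h x x.2]

lemma wnorm_zero (v : ℝ → ℝ) : wnorm v (fun _ => 0) = 0 := by
  unfold wnorm
  have : ∀ x : Set.Ioo (-1:ℝ) 1, |(0:ℝ) * v x| = 0 := fun x => by simp
  simp only [this]
  exact ciSup_const

lemma Err_eq_zero (v f : ℝ → ℝ) (n : ℕ) (P : Polynomial ℝ) (hP : P.natDegree ≤ n)
    (h : ∀ x, f x = P.eval x) : Err v f n = 0 := by
  refine le_antisymm ?_ (Err_nonneg v f n)
  calc Err v f n ≤ wnorm v (fun x => f x - P.eval x) := Err_le v f n P hP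
    _ = wnorm v (fun _ => 0) := by
        apply wnorm_congr; intro x _; rw [h x]; ring
    _ = 0 := wnorm_zero v

lemma Err_near (v f : ℝ → ℝ) (n : ℕ) {ε : ℝ} (hε : 0 < ε) :
    ∃ P : Polynomial ℝ, P.natDegree ≤ n ∧
      wnorm v (fun x => f x - P.eval x) < Err v f n + ε := by
  have h : Err v f n < Err v f n + ε := by linarith
  obtain ⟨P, hP⟩ := exists_lt_of_ciInf_lt h
  exact ⟨P.1, P.2, hP⟩

lemma MemC0_sub_poly {γ δ : ℝ} (hγ : 0 ≤ γ) (hδ : 0 ≤ δ) {f : ℝ → ℝ}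
    (hf : MemC0 γ δ f) (P : Polynomial ℝ) :
    MemC0 γ δ (fun y => f y - P.eval y) := by
  obtain ⟨g, hgc, hgeq, hg1, hgm1⟩ := hf
  refine ⟨fun x => g x - P.eval x * ((1 - x) ^ γ * (1 + x) ^ δ), ?_, ?_, ?_, ?_⟩
  · apply hgc.sub
    apply ContinuousOn.mul (Polynomial.continuous P).continuousOn
    apply ContinuousOn.mul
    · exact ((Real.continuous_rpow_const hγ).comp
        (continuous_const.sub continuous_id)).continuousOn
    · exact ((Real.continuous_rpow_const hδ).comp
        (continuous_const.add continuous_id)).continuousOn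
  · intro x hx; simp only []; rw [hgeq x hx]; ring
  · intro h; simp only []; rw [hg1 h]; simp [Real.zero_rpow (ne_of_gt h)]
  · intro h; simp only []; rw [hgm1 h]; simp [Real.zero_rpow (ne_of_gt h)]

lemma rpow_comp {a b κ r : ℝ} (hb : 0 < b) (hba : b ≤ a) (haκ : a ≤ κ * b) (hκ : 1 ≤ κ) :
    a ^ (r - 1) ≤ κ ^ |r - 1| * b ^ (r - 1) := by
  have ha : 0 < a := lt_of_lt_of_le hb hba
  rcases le_total 1 r with h | h
  · rw [abs_of_nonneg (by linarith)]
    calc a ^ (r-1) ≤ (κ * b) ^ (r-1) := Real.rpow_le_rpow ha.le haκ (by linarith)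
      _ = κ ^ (r-1) * b ^ (r-1) := Real.mul_rpow (by linarith) hb.le
  · rw [abs_of_nonpos (by linarith)]
    have h1 : a ^ (r-1) ≤ b ^ (r-1) := Real.rpow_le_rpow_of_nonpos hb hba (by linarith)
    have h2 : (1:ℝ) ≤ κ ^ (-(r-1)) := Real.one_le_rpow hκ (by linarith)
    calc a ^ (r-1) ≤ b ^ (r-1) := h1
      _ ≤ κ ^ (-(r-1)) * b ^ (r-1) := le_mul_of_one_le_left (Real.rpow_nonneg hb.le _) h2

end helpers

set_option maxHeartbeats 2000000

/-- Uniform boundedness of the de la Vallée Poussin operators in Besov spaces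
(Theorem 3.2, first claim): if `V n` is uniformly bounded on `C^0_v`, maps into
polynomials of degree `≤ n + m(n) - 1`, reproduces polynomials of degree
`≤ n - m(n)`, with `c₁ m(n) ≤ n ≤ c₂ m(n)` (`c₂ ≥ c₁ > 1`), then for every `r ≥ 0`
the operators `V n` are uniformly bounded from `B_r(v)` to itself. -/
theorem stmt9 (γ δ : ℝ) (hγ : 0 ≤ γ) (hδ : 0 ≤ δ) (v : ℝ → ℝ)
    (hv : ∀ x ∈ Set.Ioo (-1 : ℝ) 1, v x = (1 - x) ^ γ * (1 + x) ^ δ)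
    (c₁ c₂ : ℝ) (hc₁ : 1 < c₁) (hc₁₂ : c₁ ≤ c₂)
    (m : ℕ → ℕ) (n₀ : ℕ)
    (hm : ∀ n : ℕ, n₀ ≤ n → c₁ * (m n : ℝ) ≤ (n : ℝ) ∧ (n : ℝ) ≤ c₂ * (m n : ℝ))
    (V : ℕ → (ℝ → ℝ) → ℝ → ℝ) (C : ℝ)
    (hlin : ∀ (n : ℕ) (f g : ℝ → ℝ) (x : ℝ),
      V n (fun y => f y - g y) x = V n f x - V n g x)
    (hb : ∀ (n : ℕ) (f : ℝ → ℝ), MemC0 γ δ f → wnorm v (V n f) ≤ C * wnorm v f)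
    (hpoly : ∀ (n : ℕ) (f : ℝ → ℝ), ∃ P : Polynomial ℝ,
      P.natDegree ≤ n + m n - 1 ∧ ∀ x, V n f x = P.eval x)
    (hrepr : ∀ (n : ℕ) (P : Polynomial ℝ), P.natDegree ≤ n - m n →
      ∀ x, V n (fun y => P.eval y) x = P.eval x) :
    ∀ r : ℝ, 0 ≤ r → ∃ C' : ℝ, 0 < C' ∧
      ∀ n : ℕ, n₀ ≤ n → ∀ f : ℝ → ℝ, MemC0 γ δ f → MemB v f r →
        BesovNorm v (V n f) r ≤ C' * BesovNorm v f r := by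
  intro r hr
  set C₀ : ℝ := max C 1 with hC₀def
  have hC₀1 : (1:ℝ) ≤ C₀ := le_max_right _ _
  have hC₀pos : (0:ℝ) < C₀ := by linarith
  have hb' : ∀ (n : ℕ) (f : ℝ → ℝ), MemC0 γ δ f → wnorm v (V n f) ≤ C₀ * wnorm v f := by
    intro n f hf
    calc wnorm v (V n f) ≤ C * wnorm v f := hb n f hf
      _ ≤ C₀ * wnorm v f := mul_le_mul_of_nonneg_right (le_max_left _ _) (wnorm_nonneg _ _)
  -- key estimate
  have key : ∀ (n : ℕ) (f : ℝ → ℝ), MemC0 γ δ f → ∀ i j : ℕ, i ≤ j → i ≤ n - m n →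
      Err v (V n f) j ≤ C₀ * Err v f i := by
    intro n f hf i j hij his
    refine le_of_forall_pos_le_add ?_
    intro ε hε
    obtain ⟨P, hPdeg, hPw⟩ := Err_near v f i (div_pos hε hC₀pos)
    have heq : ∀ x, V n f x - P.eval x = V n (fun y => f y - P.eval y) x := by
      intro x
      rw [hlin n f (fun y => P.eval y) x, hrepr n P (hPdeg.trans his) x]
    calc Err v (V n f) j ≤ wnorm v (fun x => V n f x - P.eval x) :=
          Err_le v (V n f) j P (hPdeg.trans hij)
      _ = wnorm v (V n (fun y => f y - P.eval y)) := by
          apply wnorm_congr; intro x _; exact heq x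
      _ ≤ C₀ * wnorm v (fun y => f y - P.eval y) :=
          hb' n _ (MemC0_sub_poly hγ hδ hf P)
      _ ≤ C₀ * (Err v f i + ε / C₀) :=
          mul_le_mul_of_nonneg_left hPw.le hC₀pos.le
      _ = C₀ * Err v f i + ε := by
          rw [mul_add, mul_div_cancel₀ _ (ne_of_gt hC₀pos)]
  -- constants
  set κ : ℝ := 2 * (c₂ + 2) / (c₁ - 1) with hκdef
  have hc₁1 : (0:ℝ) < c₁ - 1 := by linarith
  have hκ1 : (1:ℝ) ≤ κ := by
    rw [hκdef, le_div_iff₀ hc₁1]; nlinarith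
  set κ' : ℝ := κ ^ |r - 1| with hκ'def
  have hκ'pos : 0 < κ' := Real.rpow_pos_of_pos (by linarith) _
  set K₂ : ℝ := C₀ * (4 / (c₁ - 1)) * κ' with hK₂def
  have hK₂pos : 0 < K₂ := by positivity
  refine ⟨2 * C₀ + K₂, by positivity, ?_⟩
  intro n hn f hf hfB
  obtain ⟨hm1, hm2⟩ := hm n hn
  -- notation
  set M := m n with hMdef
  set s := n - M with hsdef
  set N := n + M with hNdef
  obtain ⟨Q, hQdeg, hQeq⟩ := hpoly n f
  -- terms of V n f vanish from N on
  have hterm0 : ∀ k : ℕ, k ∉ Finset.range N →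
      ((k:ℝ) + 2) ^ (r-1) * Err v (V n f) (k+1) = 0 := by
    intro k hk
    rw [Finset.mem_range, not_lt] at hk
    have : Err v (V n f) (k+1) = 0 := by
      apply Err_eq_zero v (V n f) (k+1) Q _ hQeq
      omega
    rw [this, mul_zero]
  have htsum : (∑' k : ℕ, ((k:ℝ) + 2) ^ (r-1) * Err v (V n f) (k+1)) =
      ∑ k ∈ Finset.range N, ((k:ℝ) + 2) ^ (r-1) * Err v (V n f) (k+1) :=
    tsum_eq_sum hterm0
  have hwn : 0 ≤ wnorm v f := wnorm_nonneg v f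
  have hT0 : 0 ≤ ∑' k : ℕ, ((k:ℝ) + 2) ^ (r-1) * Err v f (k+1) :=
    tsum_nonneg fun k => mul_nonneg (Real.rpow_nonneg (by positivity) _) (Err_nonneg _ _ _)
  set T : ℝ := ∑' k : ℕ, ((k:ℝ) + 2) ^ (r-1) * Err v f (k+1) with hTdef
  have hBf : BesovNorm v f r = wnorm v f + T := rfl
  have hwb : wnorm v (V n f) ≤ C₀ * wnorm v f := hb' n f hf
  rcases Nat.eq_zero_or_pos M with hM0 | hM1
  · -- degenerate case: m n = 0 forces n = 0, N = 0
    have hn0 : n = 0 := by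
      have : (n:ℝ) ≤ 0 := by rw [hM0] at hm2; simpa using hm2
      exact_mod_cast le_antisymm (by exact_mod_cast this) (Nat.zero_le n)
    have hN0 : N = 0 := by omega
    have : BesovNorm v (V n f) r = wnorm v (V n f) + 0 := by
      rw [BesovNorm, htsum, hN0]; simp
    rw [this, hBf]
    nlinarith [mul_nonneg hK₂pos.le hwn, mul_nonneg hC₀pos.le hT0,
      mul_nonneg hK₂pos.le hT0]
  · -- main case
    have hMn : M < n := by
      by_contra h
      push_neg at h
      have : (n:ℝ) < c₁ * M := by
        have hMR : (1:ℝ) ≤ (M:ℝ) := by exact_mod_cast hM1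
        have : (n:ℝ) ≤ (M:ℝ) := by exact_mod_cast h
        nlinarith
      linarith
    have hs1 : 1 ≤ s := by omega
    set t := s / 2 with htdef
    have hts : t < s := by omega
    have hsN : s ≤ N := by omega
    have hsR : ((s:ℕ):ℝ) = (n:ℝ) - (M:ℝ) := by
      rw [hsdef]; push_cast [Nat.cast_sub hMn.le]; ring
    have hs_low : (c₁ - 1) * (M:ℝ) ≤ (s:ℝ) := by rw [hsR]; nlinarith
    have hMR1 : (1:ℝ) ≤ (M:ℝ) := by exact_mod_cast hM1
    have htR : (s:ℝ) - 1 ≤ 2 * (t:ℝ) := by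
      have : s ≤ 2 * t + 1 := by omega
      have h2 := (Nat.cast_le (α := ℝ)).mpr this
      push_cast at h2; linarith
    -- weight comparison, pointwise
    have hweight : ∀ k ∈ Finset.Ico s N, ∀ j ∈ Finset.Ico t s,
        ((k:ℝ) + 2) ^ (r-1) ≤ κ' * ((j:ℝ) + 2) ^ (r-1) := by
      intro k hk j hj
      rw [Finset.mem_Ico] at hk hj
      have hjk : (j:ℝ) + 2 ≤ (k:ℝ) + 2 := by
        have h : (j:ℝ) ≤ (k:ℝ) := by
          have : j ≤ k := by omega
          exact_mod_cast this
        linarith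
      have hkN : (k:ℝ) + 2 ≤ (N:ℝ) + 1 := by
        have h : (k:ℝ) + 1 ≤ (N:ℝ) := by exact_mod_cast hk.2
        linarith
      have htj : (t:ℝ) ≤ (j:ℝ) := by exact_mod_cast hj.1
      have hNM : (N:ℝ) = (n:ℝ) + (M:ℝ) := by rw [hNdef]; push_cast; ring
      have h1 : (N:ℝ) + 1 ≤ (c₂ + 2) * (M:ℝ) := by rw [hNM]; nlinarith
      have h2 : (c₂ + 2) * (M:ℝ) ≤ κ * ((t:ℝ) + 2) := by
        rw [hκdef, div_mul_eq_mul_div, le_div_iff₀ hc₁1]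
        nlinarith
      have h3 : κ * ((t:ℝ) + 2) ≤ κ * ((j:ℝ) + 2) := by nlinarith
      exact rpow_comp (by positivity) hjk (by linarith) hκ1
    -- weight sums
    set w : ℕ → ℝ := fun k => ((k:ℝ) + 2) ^ (r-1) with hwdef
    have hw0 : ∀ k, 0 ≤ w k := fun k => Real.rpow_nonneg (by positivity) _
    set L : ℝ := ∑ j ∈ Finset.Ico t s, w j with hLdef
    set U : ℝ := ∑ k ∈ Finset.Ico s N, w k with hUdef
    have hL0 : 0 ≤ L := Finset.sum_nonneg fun j _ => hw0 j
    have hU0 : 0 ≤ U := Finset.sum_nonneg fun k _ => hw0 k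
    have hcard : (Finset.Ico t s).card = s - t := Nat.card_Ico t s
    have hcardU : (Finset.Ico s N).card = N - s := Nat.card_Ico s N
    -- (s - t) * w k ≤ κ' * L for each upper k
    have hup : ∀ k ∈ Finset.Ico s N, ((s - t : ℕ):ℝ) * w k ≤ κ' * L := by
      intro k hk
      have : ∑ j ∈ Finset.Ico t s, w k ≤ ∑ j ∈ Finset.Ico t s, κ' * w j :=
        Finset.sum_le_sum fun j hj => hweight k hk j hj
      rw [Finset.sum_const, hcard, nsmul_eq_mul, ← Finset.mul_sum] at this
      exact this
    -- sum over upper range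
    have hUL : ((s - t : ℕ):ℝ) * U ≤ ((N - s : ℕ):ℝ) * (κ' * L) := by
      have : ∑ k ∈ Finset.Ico s N, ((s - t : ℕ):ℝ) * w k ≤
          ∑ k ∈ Finset.Ico s N, κ' * L := Finset.sum_le_sum hup
      rw [Finset.sum_const, hcardU, nsmul_eq_mul, ← Finset.mul_sum] at this
      exact this
    have hNsR : ((N - s : ℕ):ℝ) = 2 * (M:ℝ) := by
      have : N - s = 2 * M := by omega
      rw [this]; push_cast; ring
    have hstR : ((s:ℝ)) / 2 ≤ ((s - t : ℕ):ℝ) := by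
      have h : s ≤ 2 * (s - t) := by omega
      have := (Nat.cast_le (α := ℝ)).mpr h
      push_cast at this; linarith
    have hst_low : (c₁ - 1) * (M:ℝ) / 2 ≤ ((s - t : ℕ):ℝ) := by
      have := hs_low; linarith
    -- conclude (c₁ - 1) * U ≤ 4 * κ' * L
    have hULfin : (c₁ - 1) * U ≤ 4 * (κ' * L) := by
      have hstpos : (0:ℝ) < ((s - t : ℕ):ℝ) := by nlinarith
      have h1 : (c₁ - 1) * (M:ℝ) / 2 * U ≤ ((s - t : ℕ):ℝ) * U :=
        mul_le_mul_of_nonneg_right hst_low hU0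
      have h2 : (c₁ - 1) * (M:ℝ) / 2 * U ≤ 2 * (M:ℝ) * (κ' * L) := by
        rw [hNsR] at hUL; linarith
      nlinarith [mul_nonneg hκ'pos.le hL0]
    -- error comparison on lower range
    have hE0 : 0 ≤ Err v f s := Err_nonneg v f s
    have hEL : Err v f s * L ≤ T := by
      have h1 : ∀ j ∈ Finset.Ico t s, Err v f s * w j ≤ w j * Err v f (j+1) := by
        intro j hj
        rw [Finset.mem_Ico] at hj
        have hanti : Err v f s ≤ Err v f (j+1) := Err_anti v f (by omega)
        calc Err v f s * w j = w j * Err v f s := by ring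
          _ ≤ w j * Err v f (j+1) := mul_le_mul_of_nonneg_left hanti (hw0 j)
      calc Err v f s * L = ∑ j ∈ Finset.Ico t s, Err v f s * w j := by
            rw [hLdef, Finset.mul_sum]
        _ ≤ ∑ j ∈ Finset.Ico t s, w j * Err v f (j+1) := Finset.sum_le_sum h1
        _ ≤ T := Summable.sum_le_tsum _ (fun k _ => mul_nonneg (hw0 k) (Err_nonneg _ _ _)) hfB
    -- part 1
    have hpart1 : ∑ k ∈ Finset.Ico 0 s, w k * Err v (V n f) (k+1) ≤ C₀ * T := by
      have h1 : ∀ k ∈ Finset.Ico 0 s, w k * Err v (V n f) (k+1) ≤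
          C₀ * (w k * Err v f (k+1)) := by
        intro k hk
        rw [Finset.mem_Ico] at hk
        have hkey : Err v (V n f) (k+1) ≤ C₀ * Err v f (k+1) :=
          key n f hf (k+1) (k+1) le_rfl (by omega)
        calc w k * Err v (V n f) (k+1) ≤ w k * (C₀ * Err v f (k+1)) :=
              mul_le_mul_of_nonneg_left hkey (hw0 k)
          _ = C₀ * (w k * Err v f (k+1)) := by ring
      calc ∑ k ∈ Finset.Ico 0 s, w k * Err v (V n f) (k+1)
          ≤ ∑ k ∈ Finset.Ico 0 s, C₀ * (w k * Err v f (k+1)) := Finset.sum_le_sum h1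
        _ = C₀ * ∑ k ∈ Finset.Ico 0 s, w k * Err v f (k+1) := by rw [Finset.mul_sum]
        _ ≤ C₀ * T := by
            apply mul_le_mul_of_nonneg_left _ hC₀pos.le
            exact Summable.sum_le_tsum _ (fun k _ => mul_nonneg (hw0 k) (Err_nonneg _ _ _)) hfB
    -- part 2
    have hpart2 : ∑ k ∈ Finset.Ico s N, w k * Err v (V n f) (k+1) ≤ K₂ * T := by
      have h1 : ∀ k ∈ Finset.Ico s N, w k * Err v (V n f) (k+1) ≤
          C₀ * (Err v f s * w k) := by
        intro k hk
        rw [Finset.mem_Ico] at hk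
        have hkey : Err v (V n f) (k+1) ≤ C₀ * Err v f s :=
          key n f hf s (k+1) (by omega) (by omega)
        calc w k * Err v (V n f) (k+1) ≤ w k * (C₀ * Err v f s) :=
              mul_le_mul_of_nonneg_left hkey (hw0 k)
          _ = C₀ * (Err v f s * w k) := by ring
      have h2 : ∑ k ∈ Finset.Ico s N, w k * Err v (V n f) (k+1) ≤
          C₀ * (Err v f s * U) := by
        calc ∑ k ∈ Finset.Ico s N, w k * Err v (V n f) (k+1)
            ≤ ∑ k ∈ Finset.Ico s N, C₀ * (Err v f s * w k) := Finset.sum_le_sum h1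
          _ = C₀ * (Err v f s * U) := by rw [hUdef, Finset.mul_sum, Finset.mul_sum]
      have h3 : Err v f s * U * (c₁ - 1) ≤ 4 * (κ' * T) := by
        have h4 : Err v f s * ((c₁ - 1) * U) ≤ Err v f s * (4 * (κ' * L)) :=
          mul_le_mul_of_nonneg_left hULfin hE0
        nlinarith [mul_le_mul_of_nonneg_left hEL (by positivity : (0:ℝ) ≤ 4 * κ')]
      have hK₂T : K₂ * T = C₀ * (4 * (κ' * T)) / (c₁ - 1) := by
        rw [hK₂def]; field_simp
      calc ∑ k ∈ Finset.Ico s N, w k * Err v (V n f) (k+1)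
          ≤ C₀ * (Err v f s * U) := h2
        _ ≤ K₂ * T := by
            rw [hK₂T, le_div_iff₀ hc₁1]
            calc C₀ * (Err v f s * U) * (c₁ - 1)
                = C₀ * (Err v f s * U * (c₁ - 1)) := by ring
              _ ≤ C₀ * (4 * (κ' * T)) := mul_le_mul_of_nonneg_left h3 hC₀pos.le
    -- assemble
    have hsplit : ∑ k ∈ Finset.range N, w k * Err v (V n f) (k+1) =
        (∑ k ∈ Finset.Ico 0 s, w k * Err v (V n f) (k+1)) +
        ∑ k ∈ Finset.Ico s N, w k * Err v (V n f) (k+1) := by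
      rw [Finset.range_eq_Ico,
        ← Finset.sum_Ico_consecutive _ (Nat.zero_le s) hsN]
    have hBV : BesovNorm v (V n f) r = wnorm v (V n f) +
        ∑ k ∈ Finset.range N, w k * Err v (V n f) (k+1) := by
      rw [BesovNorm, htsum]
    rw [hBV, hsplit, hBf]
    have h5 : wnorm v (V n f) ≤ C₀ * wnorm v f := hwb
    nlinarith [mul_nonneg hC₀pos.le hwn, mul_nonneg hK₂pos.le hwn,
      mul_nonneg hC₀pos.le hT0]
end
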